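/- Let α : A → C, β : B → C, and f : A → B be homomorphisms of commutative rings. Then there exists an ideal J of B such that A⋈^f J equals the pullback α ×_C β if and only if α = β ∘ f; and when these equivalent conditions hold, the ideal J must equal Ker(β), i.e., α ×_C β = A⋈^f Ker(β). -/

import Mathlib

/-!
A pair `(a, b)` lies in `A ⋈^f J` exactly when `b - f a ∈ J`. If `A ⋈^f J` is the pullback,
testing the elements `(a, f a)` forces `α = β ∘ f`, and testing the elements `(0, b)` forces
`J = Ker β`; conversely, when `α = β ∘ f` the condition `α a = β b` reads `b - f a ∈ Ker β`.
-/

/-- The amalgamation `A ⋈^f J = {(a, f a + j) | a ∈ A, j ∈ J}` of `A` with `B`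
along the ideal `J` of `B`, with respect to the ring homomorphism `f : A → B`,
as a subring of the product ring `A × B`. -/
def amalgamation {A B : Type*} [CommRing A] [CommRing B] (f : A →+* B) (J : Ideal B) :
    Subring (A × B) where
  carrier := {x : A × B | ∃ a : A, ∃ j ∈ J, x = (a, f a + j)}
  one_mem' := ⟨1, 0, J.zero_mem, by simp [Prod.one_eq_mk]⟩
  zero_mem' := ⟨0, 0, J.zero_mem, by simp [Prod.zero_eq_mk]⟩
  mul_mem' := by
    rintro x y ⟨a, j, hj, rfl⟩ ⟨c, k, hk, rfl⟩
    refine ⟨a * c, f a * k + j * f c + j * k,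
      J.add_mem (J.add_mem (J.mul_mem_left _ hk) (J.mul_mem_right _ hj)) (J.mul_mem_right _ hj),
      ?_⟩
    simp only [Prod.mk_mul_mk, map_mul, Prod.mk.injEq]
    exact ⟨trivial, by ring⟩
  add_mem' := by
    rintro x y ⟨a, j, hj, rfl⟩ ⟨c, k, hk, rfl⟩
    refine ⟨a + c, j + k, J.add_mem hj hk, ?_⟩
    simp only [Prod.mk_add_mk, map_add, Prod.mk.injEq]
    exact ⟨trivial, by ring⟩
  neg_mem' := by
    rintro x ⟨a, j, hj, rfl⟩
    refine ⟨-a, -j, J.neg_mem hj, ?_⟩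
    simp only [Prod.neg_mk, map_neg, Prod.mk.injEq]
    exact ⟨trivial, by ring⟩

/-- The pullback (fiber product) `α ×_C β = {(a, b) ∈ A × B | α a = β b}` of two
ring homomorphisms `α : A → C` and `β : B → C`, as a subring of `A × B`. -/
def pullbackSubring {A B C : Type*} [CommRing A] [CommRing B] [CommRing C]
    (α : A →+* C) (β : B →+* C) : Subring (A × B) where
  carrier := {x : A × B | α x.1 = β x.2}
  one_mem' := by simp
  zero_mem' := by simp
  mul_mem' := by
    intro x y hx hy
    simp only [Set.mem_setOf_eq, Prod.fst_mul, Prod.snd_mul, map_mul] at *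
    rw [hx, hy]
  add_mem' := by
    intro x y hx hy
    simp only [Set.mem_setOf_eq, Prod.fst_add, Prod.snd_add, map_add] at *
    rw [hx, hy]
  neg_mem' := by
    intro x hx
    simp only [Set.mem_setOf_eq, Prod.fst_neg, Prod.snd_neg, map_neg] at *
    rw [hx]

section Amalgamation

variable {A B C : Type*} [CommRing A] [CommRing B] [CommRing C]

theorem mem_amalgamation_iff_sub_mem {f : A →+* B} {J : Ideal B} {x : A × B} :
    x ∈ amalgamation f J ↔ x.2 - f x.1 ∈ J := by
  constructor
  · rintro ⟨a, j, hj, rfl⟩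
    simpa using hj
  · intro hx
    exact ⟨x.1, x.2 - f x.1, hx, by simp⟩

theorem mem_pullbackSubring_iff {α : A →+* C} {β : B →+* C} {x : A × B} :
    x ∈ pullbackSubring α β ↔ α x.1 = β x.2 :=
  Iff.rfl

theorem pullbackSubring_comp_eq_amalgamation_ker (β : B →+* C) (f : A →+* B) :
    pullbackSubring (β.comp f) β = amalgamation f (RingHom.ker β) := by
  ext x
  rw [mem_amalgamation_iff_sub_mem, mem_pullbackSubring_iff, RingHom.mem_ker, map_sub,
    sub_eq_zero, RingHom.comp_apply, eq_comm]

variable {α : A →+* C} {β : B →+* C} {f : A →+* B} {J : Ideal B}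

theorem eq_comp_of_amalgamation_eq_pullbackSubring
    (hJ : amalgamation f J = pullbackSubring α β) : α = β.comp f := by
  ext a
  have hmem : (a, f a) ∈ amalgamation f J := mem_amalgamation_iff_sub_mem.2 (by simp)
  rwa [hJ, mem_pullbackSubring_iff] at hmem

theorem eq_ker_of_amalgamation_eq_pullbackSubring
    (hJ : amalgamation f J = pullbackSubring α β) : J = RingHom.ker β := by
  ext b
  have hmem : ((0 : A), b) ∈ amalgamation f J ↔ ((0 : A), b) ∈ pullbackSubring α β := by
    rw [hJ]
  simpa [mem_amalgamation_iff_sub_mem, mem_pullbackSubring_iff, eq_comm] using hmem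

end Amalgamation

theorem statement15 {A B C : Type*} [CommRing A] [CommRing B] [CommRing C]
    (α : A →+* C) (β : B →+* C) (f : A →+* B) :
    ((∃ J : Ideal B, amalgamation f J = pullbackSubring α β) ↔ α = β.comp f) ∧
    (α = β.comp f → pullbackSubring α β = amalgamation f (RingHom.ker β)) ∧
    (∀ J : Ideal B, amalgamation f J = pullbackSubring α β → J = RingHom.ker β) := by
  have of_comp (h : α = β.comp f) : pullbackSubring α β = amalgamation f (RingHom.ker β) :=
    h ▸ pullbackSubring_comp_eq_amalgamation_ker β f
  refine ⟨⟨fun ⟨_, hJ⟩ => eq_comp_of_amalgamation_eq_pullbackSubring hJ,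
    fun h => ⟨RingHom.ker β, (of_comp h).symm⟩⟩, of_comp, ?_⟩
  exact fun _ => eq_ker_of_amalgamation_eq_pullbackSubring
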